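/- arXiv:1512.06607 — 2 statements merged into one kernel-verified Lean document; each statement's English description precedes it below -/
import Mathlib

section
/- Let (X, μ) be a measure space, d ≥ 1 an integer, ε > 0 and M ≥ 0. Let ℓ : X → ℝ be measurable with 0 ≤ ℓ(x) ≤ M for μ-a.e. x, and let u, v : X → ℝ^d be measurable functions with ∫_X |u(x) − v(x)|² dμ < ∞. Then (∫_X |ℓ(x) h_ε(u(x)) − ℓ(x) h_ε(v(x))|² dμ)^{1/2} ≤ (2M/ε) (∫_X |u(x) − v(x)|² dμ)^{1/2}, where h_ε(w) = w/√(ε² + |w|²). -/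
open MeasureTheory

/-!
With `σ_w = √(ε² + ‖w‖²)`, write `h_ε(a) − h_ε(b) = (a − b)/σ_a + (1/σ_a − 1/σ_b) b`.
Since `σ_w ≥ ε`, `σ_b ≥ ‖b‖` and `w ↦ σ_w` is 1-Lipschitz, each term has norm at most
`‖a − b‖/ε`, so `h_ε` is `2/ε`-Lipschitz. Multiplying by `0 ≤ ℓ ≤ M`, squaring and
integrating gives the `L²` bound.
-/

/-- The map `h_ε` of the paper. -/
noncomputable def regularizedUnit {E : Type*} [NormedAddCommGroup E] [NormedSpace ℝ E]
    (ε : ℝ) (w : E) : E :=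
  (Real.sqrt (ε ^ 2 + ‖w‖ ^ 2))⁻¹ • w

lemma abs_sqrt_sq_add_sq_sub_le (ε s t : ℝ) :
    |Real.sqrt (ε ^ 2 + s ^ 2) - Real.sqrt (ε ^ 2 + t ^ 2)| ≤ |s - t| := by
  set σ := Real.sqrt (ε ^ 2 + s ^ 2)
  set τ := Real.sqrt (ε ^ 2 + t ^ 2)
  have hσ : σ ^ 2 = ε ^ 2 + s ^ 2 := Real.sq_sqrt (by positivity)
  have hτ : τ ^ 2 = ε ^ 2 + t ^ 2 := Real.sq_sqrt (by positivity)
  have hs : |s| ≤ σ := Real.abs_le_sqrt (by nlinarith)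
  have ht : |t| ≤ τ := Real.abs_le_sqrt (by nlinarith)
  have hσ0 : 0 ≤ σ := Real.sqrt_nonneg _
  have hτ0 : 0 ≤ τ := Real.sqrt_nonneg _
  rcases (add_nonneg hσ0 hτ0).eq_or_lt with hsum | hsum
  · rw [show σ = τ by linarith, sub_self, abs_zero]
    exact abs_nonneg _
  · refine le_of_mul_le_mul_right ?_ hsum
    calc |σ - τ| * (σ + τ) = |s - t| * |s + t| := by
          rw [← abs_of_pos hsum, ← abs_mul, ← abs_mul]
          congr 1
          nlinarith
      _ ≤ |s - t| * (σ + τ) := by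
          gcongr
          exact (abs_add_le s t).trans (add_le_add hs ht)

lemma norm_regularizedUnit_sub_le {E : Type*} [NormedAddCommGroup E] [NormedSpace ℝ E]
    {ε : ℝ} (hε : 0 < ε) (a b : E) :
    ‖regularizedUnit ε a - regularizedUnit ε b‖ ≤ 2 / ε * ‖a - b‖ := by
  set σ := Real.sqrt (ε ^ 2 + ‖a‖ ^ 2)
  set τ := Real.sqrt (ε ^ 2 + ‖b‖ ^ 2)
  have hεσ : ε ≤ σ := Real.le_sqrt_of_sq_le (by nlinarith [norm_nonneg a])
  have hετ : ε ≤ τ := Real.le_sqrt_of_sq_le (by nlinarith [norm_nonneg b])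
  have hσ : 0 < σ := hε.trans_le hεσ
  have hτ : 0 < τ := hε.trans_le hετ
  have hbτ : ‖b‖ ≤ τ := Real.le_sqrt_of_sq_le (by nlinarith)
  have hστ : |τ - σ| ≤ ‖a - b‖ := by
    rw [abs_sub_comm]
    exact (abs_sqrt_sq_add_sq_sub_le ε ‖a‖ ‖b‖).trans (abs_norm_sub_norm_le a b)
  have hsplit : regularizedUnit ε a - regularizedUnit ε b
      = σ⁻¹ • (a - b) + (σ⁻¹ - τ⁻¹) • b := by
    rw [regularizedUnit, regularizedUnit, smul_sub, sub_smul]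
    abel
  have hfirst : ‖σ⁻¹ • (a - b)‖ ≤ ε⁻¹ * ‖a - b‖ := by
    rw [norm_smul, Real.norm_of_nonneg (inv_nonneg.mpr hσ.le)]
    gcongr
  have hsecond : ‖(σ⁻¹ - τ⁻¹) • b‖ ≤ ε⁻¹ * ‖a - b‖ := by
    calc ‖(σ⁻¹ - τ⁻¹) • b‖ = |τ - σ| / (σ * τ) * ‖b‖ := by
          rw [norm_smul, Real.norm_eq_abs, inv_sub_inv hσ.ne' hτ.ne', abs_div,
            abs_of_pos (mul_pos hσ hτ)]
      _ ≤ ‖a - b‖ / (σ * τ) * τ := by gcongr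
      _ = σ⁻¹ * ‖a - b‖ := by field_simp
      _ ≤ ε⁻¹ * ‖a - b‖ := by gcongr
  calc ‖regularizedUnit ε a - regularizedUnit ε b‖
      ≤ ‖σ⁻¹ • (a - b)‖ + ‖(σ⁻¹ - τ⁻¹) • b‖ := hsplit ▸ norm_add_le _ _
    _ ≤ ε⁻¹ * ‖a - b‖ + ε⁻¹ * ‖a - b‖ := add_le_add hfirst hsecond
    _ = 2 / ε * ‖a - b‖ := by ring

lemma sqrt_integral_norm_sq_le_of_ae_norm_le {X E F : Type*} [MeasurableSpace X]
    {μ : Measure X} [NormedAddCommGroup E] [NormedAddCommGroup F] {f : X → E} {g : X → F}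
    {c : ℝ} (hc : 0 ≤ c) (hg : Integrable (fun x => ‖g x‖ ^ 2) μ)
    (hfg : ∀ᵐ x ∂μ, ‖f x‖ ≤ c * ‖g x‖) :
    Real.sqrt (∫ x, ‖f x‖ ^ 2 ∂μ) ≤ c * Real.sqrt (∫ x, ‖g x‖ ^ 2 ∂μ) := by
  have hsq : ∫ x, ‖f x‖ ^ 2 ∂μ ≤ c ^ 2 * ∫ x, ‖g x‖ ^ 2 ∂μ := by
    rw [← integral_const_mul]
    refine integral_mono_of_nonneg (ae_of_all _ fun x => by positivity) (hg.const_mul _) ?_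
    filter_upwards [hfg] with x hx
    rw [← mul_pow]
    exact pow_le_pow_left₀ (norm_nonneg _) hx 2
  calc Real.sqrt (∫ x, ‖f x‖ ^ 2 ∂μ) ≤ Real.sqrt (c ^ 2 * ∫ x, ‖g x‖ ^ 2 ∂μ) :=
        Real.sqrt_le_sqrt hsq
    _ = c * Real.sqrt (∫ x, ‖g x‖ ^ 2 ∂μ) := by
        rw [Real.sqrt_mul (sq_nonneg c), Real.sqrt_sq hc]

theorem stmt_10_general {X : Type*} [MeasurableSpace X] (μ : Measure X)
    (d : ℕ) (ε : ℝ) (hε : 0 < ε) (M : ℝ) (hM : 0 ≤ M)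
    (ℓ : X → ℝ)
    (hℓ : ∀ᵐ x ∂μ, 0 ≤ ℓ x ∧ ℓ x ≤ M)
    (u v : X → EuclideanSpace ℝ (Fin d))
    (huv : Integrable (fun x => ‖u x - v x‖ ^ 2) μ) :
    Real.sqrt (∫ x, ‖ℓ x • ((Real.sqrt (ε ^ 2 + ‖u x‖ ^ 2))⁻¹ • u x)
        - ℓ x • ((Real.sqrt (ε ^ 2 + ‖v x‖ ^ 2))⁻¹ • v x)‖ ^ 2 ∂μ) ≤
      (2 * M / ε) * Real.sqrt (∫ x, ‖u x - v x‖ ^ 2 ∂μ) := by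
  refine sqrt_integral_norm_sq_le_of_ae_norm_le (by positivity) huv ?_
  filter_upwards [hℓ] with x ⟨hℓ0, hℓM⟩
  change ‖ℓ x • regularizedUnit ε (u x) - ℓ x • regularizedUnit ε (v x)‖ ≤ _
  rw [← smul_sub, norm_smul, Real.norm_of_nonneg hℓ0]
  calc ℓ x * ‖regularizedUnit ε (u x) - regularizedUnit ε (v x)‖
      ≤ M * (2 / ε * ‖u x - v x‖) := by
        gcongr
        exact norm_regularizedUnit_sub_le hε (u x) (v x)
    _ = 2 * M / ε * ‖u x - v x‖ := by ring

/-- Lipschitz continuity of `Ψ'_ε` in L²: if `0 ≤ ℓ ≤ M` a.e., then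
`‖ℓ·(h_ε∘u) − ℓ·(h_ε∘v)‖_{L²} ≤ (2M/ε) ‖u − v‖_{L²}`, where
`h_ε(w) = w / √(ε² + |w|²)`. -/
theorem stmt_10 {X : Type*} [MeasurableSpace X] (μ : Measure X)
    (d : ℕ) (hd : 1 ≤ d) (ε : ℝ) (hε : 0 < ε) (M : ℝ) (hM : 0 ≤ M)
    (ℓ : X → ℝ) (hℓmeas : Measurable ℓ)
    (hℓ : ∀ᵐ x ∂μ, 0 ≤ ℓ x ∧ ℓ x ≤ M)
    (u v : X → EuclideanSpace ℝ (Fin d)) (hu : Measurable u) (hv : Measurable v)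
    (huv : Integrable (fun x => ‖u x - v x‖ ^ 2) μ) :
    Real.sqrt (∫ x, ‖ℓ x • ((Real.sqrt (ε ^ 2 + ‖u x‖ ^ 2))⁻¹ • u x)
        - ℓ x • ((Real.sqrt (ε ^ 2 + ‖v x‖ ^ 2))⁻¹ • v x)‖ ^ 2 ∂μ) ≤
      (2 * M / ε) * Real.sqrt (∫ x, ‖u x - v x‖ ^ 2 ∂μ) :=
  stmt_10_general μ d ε hε M hM ℓ hℓ u v huv
end

section
/- Let (X, μ) be a finite measure space, d ≥ 1 an integer, and let ℓ : X → ℝ be measurable, square-integrable and nonnegative μ-a.e. Let (ε_n) be a sequence of positive reals converging to 0, let w : X → ℝ^d and (w_n) be measurable functions with ∫_X |w|² dμ < ∞, ∫_X |w_n|² dμ < ∞ for all n, and ∫_X |w_n − w|² dμ → 0 as n → ∞. Then ∫_X ℓ(x) √(ε_n² + |w_n(x)|²) dμ → ∫_X ℓ(x) |w(x)| dμ as n → ∞. -/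
/-!
Pointwise, `|√(ε² + ‖u‖²) - ‖v‖| ≤ |ε| + ‖u - v‖`. Integrating against `|ℓ|` and applying
Cauchy–Schwarz to the second term gives
`|Ψ_ε(u) - Ψ(v)| ≤ |ε| ‖ℓ‖₁ + ‖ℓ‖₂ ‖u - v‖₂`, and both terms tend to zero.
-/

open MeasureTheory Filter Topology

theorem abs_sqrt_sq_add_sq_sub_le_s14 {b : ℝ} (hb : 0 ≤ b) (a : ℝ) :
    |√(a ^ 2 + b ^ 2) - b| ≤ |a| := by
  rw [abs_sub_le_iff]
  constructor
  · have : √(a ^ 2 + b ^ 2) ≤ |a| + b := by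
      rw [Real.sqrt_le_left (by positivity), ← sq_abs a]
      nlinarith [abs_nonneg a]
    linarith
  · have : b ≤ √(a ^ 2 + b ^ 2) := Real.le_sqrt_of_sq_le (by nlinarith)
    linarith [abs_nonneg a]

theorem abs_sqrt_sq_add_norm_sq_sub_norm_le {E : Type*} [SeminormedAddCommGroup E]
    (ε : ℝ) (u v : E) : |√(ε ^ 2 + ‖u‖ ^ 2) - ‖v‖| ≤ |ε| + ‖u - v‖ :=
  calc |√(ε ^ 2 + ‖u‖ ^ 2) - ‖v‖|
      ≤ |√(ε ^ 2 + ‖u‖ ^ 2) - ‖u‖| + |‖u‖ - ‖v‖| := abs_sub_le _ _ _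
    _ ≤ |ε| + ‖u - v‖ :=
      add_le_add (abs_sqrt_sq_add_sq_sub_le_s14 (norm_nonneg u) ε) (abs_norm_sub_norm_le u v)

namespace MeasureTheory

variable {X : Type*} [MeasurableSpace X] {μ : Measure X}
  {E : Type*} [NormedAddCommGroup E]

theorem integral_norm_mul_norm_le_sqrt_mul_sqrt {f g : X → E} (hf : MemLp f 2 μ)
    (hg : MemLp g 2 μ) :
    ∫ x, ‖f x‖ * ‖g x‖ ∂μ ≤ √(∫ x, ‖f x‖ ^ 2 ∂μ) * √(∫ x, ‖g x‖ ^ 2 ∂μ) := by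
  have := integral_mul_norm_le_Lp_mul_Lq (μ := μ) Real.HolderConjugate.two_two
    (by simpa using hf) (by simpa using hg)
  simpa only [Real.rpow_two, ← Real.sqrt_eq_rpow] using this

theorem MemLp.sqrt_sq_add_norm_sq [IsFiniteMeasure μ] {u : X → E} (hu : MemLp u 2 μ) (ε : ℝ) :
    MemLp (fun x => √(ε ^ 2 + ‖u x‖ ^ 2)) 2 μ := by
  have hmeas : AEStronglyMeasurable (fun x => √(ε ^ 2 + ‖u x‖ ^ 2)) μ :=
    (continuous_const.add (continuous_id.pow 2)).sqrt.comp_aestronglyMeasurable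
      hu.aestronglyMeasurable.norm
  refine (memLp_two_iff_integrable_sq hmeas).2 ?_
  have hsq (x : X) : √(ε ^ 2 + ‖u x‖ ^ 2) ^ 2 = ε ^ 2 + ‖u x‖ ^ 2 :=
    Real.sq_sqrt (by positivity)
  simp only [hsq]
  exact (integrable_const _).add (hu.integrable_norm_pow two_ne_zero)

theorem abs_integral_mul_sqrt_sub_integral_mul_norm_le [IsFiniteMeasure μ] {ℓ : X → ℝ}
    {u v : X → E} (hℓ : MemLp ℓ 2 μ) (hu : MemLp u 2 μ) (hv : MemLp v 2 μ) (ε : ℝ) :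
    |∫ x, ℓ x * √(ε ^ 2 + ‖u x‖ ^ 2) ∂μ - ∫ x, ℓ x * ‖v x‖ ∂μ|
      ≤ |ε| * ∫ x, |ℓ x| ∂μ + √(∫ x, ℓ x ^ 2 ∂μ) * √(∫ x, ‖u x - v x‖ ^ 2 ∂μ) := by
  have hℓ1 : Integrable ℓ μ := hℓ.integrable one_le_two
  have huv : MemLp (fun x => ‖u x - v x‖) 2 μ := (hu.sub hv).norm
  have hℓuv : Integrable (fun x => |ℓ x| * ‖u x - v x‖) μ := hℓ.abs.integrable_mul huv
  have hℓu : Integrable (fun x => ℓ x * √(ε ^ 2 + ‖u x‖ ^ 2)) μ :=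
    hℓ.integrable_mul (hu.sqrt_sq_add_norm_sq ε)
  have hℓv : Integrable (fun x => ℓ x * ‖v x‖) μ := hℓ.integrable_mul hv.norm
  rw [← integral_sub hℓu hℓv]
  calc |∫ x, (ℓ x * √(ε ^ 2 + ‖u x‖ ^ 2) - ℓ x * ‖v x‖) ∂μ|
      ≤ ∫ x, |ℓ x * √(ε ^ 2 + ‖u x‖ ^ 2) - ℓ x * ‖v x‖| ∂μ := abs_integral_le_integral_abs
    _ ≤ ∫ x, (|ε| * |ℓ x| + |ℓ x| * ‖u x - v x‖) ∂μ := by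
      refine integral_mono_of_nonneg (.of_forall fun x => abs_nonneg _)
        ((hℓ1.abs.const_mul _).add hℓuv) (.of_forall fun x => ?_)
      simp only [← mul_sub, abs_mul, mul_comm |ε|, ← mul_add]
      exact mul_le_mul_of_nonneg_left (abs_sqrt_sq_add_norm_sq_sub_norm_le ε (u x) (v x))
        (abs_nonneg _)
    _ = |ε| * ∫ x, |ℓ x| ∂μ + ∫ x, ‖ℓ x‖ * ‖‖u x - v x‖‖ ∂μ := by
      rw [integral_add (hℓ1.abs.const_mul _) hℓuv, integral_const_mul]
      simp only [Real.norm_eq_abs, abs_norm]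
    _ ≤ |ε| * ∫ x, |ℓ x| ∂μ + √(∫ x, ℓ x ^ 2 ∂μ) * √(∫ x, ‖u x - v x‖ ^ 2 ∂μ) := by
      gcongr
      simpa only [Real.norm_eq_abs, sq_abs, abs_norm] using
        integral_norm_mul_norm_le_sqrt_mul_sqrt hℓ huv

theorem tendsto_integral_mul_sqrt_sq_add_norm_sq [IsFiniteMeasure μ] {ι : Type*}
    {l : Filter ι} {ℓ : X → ℝ} {ε : ι → ℝ} {w : X → E} {wn : ι → X → E}
    (hℓ : MemLp ℓ 2 μ) (hε : Tendsto ε l (𝓝 0)) (hw : MemLp w 2 μ)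
    (hwn : ∀ n, MemLp (wn n) 2 μ)
    (hconv : Tendsto (fun n => ∫ x, ‖wn n x - w x‖ ^ 2 ∂μ) l (𝓝 0)) :
    Tendsto (fun n => ∫ x, ℓ x * √(ε n ^ 2 + ‖wn n x‖ ^ 2) ∂μ) l
      (𝓝 (∫ x, ℓ x * ‖w x‖ ∂μ)) := by
  rw [tendsto_iff_norm_sub_tendsto_zero]
  refine squeeze_zero (fun n => norm_nonneg _)
    (fun n => abs_integral_mul_sqrt_sub_integral_mul_norm_le hℓ (hwn n) hw (ε n)) ?_
  have hbound : Tendsto (fun n => |ε n| * ∫ x, |ℓ x| ∂μ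
      + √(∫ x, ℓ x ^ 2 ∂μ) * √(∫ x, ‖wn n x - w x‖ ^ 2 ∂μ)) l
      (𝓝 (|0| * ∫ x, |ℓ x| ∂μ + √(∫ x, ℓ x ^ 2 ∂μ) * √0)) :=
    (hε.abs.mul_const _).add (hconv.sqrt.const_mul _)
  simpa using hbound

end MeasureTheory

theorem stmt_14_general {X : Type*} [MeasurableSpace X] (μ : Measure X) [IsFiniteMeasure μ]
    (d : ℕ)
    (ℓ : X → ℝ) (hℓmeas : Measurable ℓ) (hℓsq : Integrable (fun x => ℓ x ^ 2) μ)
    (ε : ℕ → ℝ) (hεlim : Tendsto ε atTop (nhds 0))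
    (w : X → EuclideanSpace ℝ (Fin d)) (hw : Measurable w)
    (hw2 : Integrable (fun x => ‖w x‖ ^ 2) μ)
    (wn : ℕ → X → EuclideanSpace ℝ (Fin d)) (hwn : ∀ n, Measurable (wn n))
    (hwn2 : ∀ n, Integrable (fun x => ‖wn n x‖ ^ 2) μ)
    (hconv : Tendsto (fun n => ∫ x, ‖wn n x - w x‖ ^ 2 ∂μ) atTop (nhds 0)) :
    Tendsto (fun n => ∫ x, ℓ x * Real.sqrt ((ε n) ^ 2 + ‖wn n x‖ ^ 2) ∂μ) atTop
      (nhds (∫ x, ℓ x * ‖w x‖ ∂μ)) :=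
  tendsto_integral_mul_sqrt_sq_add_norm_sq
    ((memLp_two_iff_integrable_sq hℓmeas.aestronglyMeasurable).2 hℓsq) hεlim
    ((memLp_two_iff_integrable_sq_norm hw.aestronglyMeasurable).2 hw2)
    (fun n => (memLp_two_iff_integrable_sq_norm (hwn n).aestronglyMeasurable).2 (hwn2 n))
    hconv

/-- Lemma 8 of the paper: if `ε_n → 0`, `ε_n > 0`, and `w_n → w` in L²(μ; ℝ^d)
for a finite measure μ and a nonnegative square-integrable threshold ℓ, then
`Ψ_{ε_n}(w_n) = ∫ ℓ √(ε_n² + |w_n|²) dμ → Ψ(w) = ∫ ℓ |w| dμ`. -/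
theorem stmt_14 {X : Type*} [MeasurableSpace X] (μ : Measure X) [IsFiniteMeasure μ]
    (d : ℕ) (hd : 1 ≤ d)
    (ℓ : X → ℝ) (hℓmeas : Measurable ℓ) (hℓsq : Integrable (fun x => ℓ x ^ 2) μ)
    (hℓ : ∀ᵐ x ∂μ, 0 ≤ ℓ x)
    (ε : ℕ → ℝ) (hεpos : ∀ n, 0 < ε n) (hεlim : Tendsto ε atTop (nhds 0))
    (w : X → EuclideanSpace ℝ (Fin d)) (hw : Measurable w)
    (hw2 : Integrable (fun x => ‖w x‖ ^ 2) μ)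
    (wn : ℕ → X → EuclideanSpace ℝ (Fin d)) (hwn : ∀ n, Measurable (wn n))
    (hwn2 : ∀ n, Integrable (fun x => ‖wn n x‖ ^ 2) μ)
    (hconv : Tendsto (fun n => ∫ x, ‖wn n x - w x‖ ^ 2 ∂μ) atTop (nhds 0)) :
    Tendsto (fun n => ∫ x, ℓ x * Real.sqrt ((ε n) ^ 2 + ‖wn n x‖ ^ 2) ∂μ) atTop
      (nhds (∫ x, ℓ x * ‖w x‖ ∂μ)) :=
  stmt_14_general μ d ℓ hℓmeas hℓsq ε hεlim w hw hw2 wn hwn hwn2 hconv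
end
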